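/- Let ρ : ℝ² → [0,∞) be measurable with ρ(x) ≤ H + ln_−|x−ξ| for some H ≥ 1 and ξ ∈ ℝ², and with ‖ρ‖_{L¹} ≤ 1 and ‖ρ‖_{L²} ≤ M. Then the field E(x) = ∫ ρ(y) (x−y)/|x−y|² dy satisfies ‖E‖_{L^∞} ≤ C(M) √(ln(H+e)) for a constant C(M) depending only on M. -/

import Mathlib

open MeasureTheory

noncomputable def lnm (r : ℝ) : ℝ := max (-Real.log r) 0

/-!
Since `‖E x‖ ≤ ∫ ρ y / r` with `r = ‖y - x‖`, split according to `r`. Where `r < δ`, use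
`ρ y ≤ H + lnm s` with `s = ‖y - ξ‖`: the term `H / r` contributes `2πHδ`, and
`lnm s / r ≤ lnm r / r + lnm s / s` contributes at most `4π`, since in polar coordinates each
term integrates to `2π ∫₀¹ (-log r) dr = 2π`. Where `δ ≤ r < 1`, Cauchy–Schwarz gives
`‖ρ‖₂ √(2π log δ⁻¹)`; where `r ≥ 1`, `ρ y / r ≤ ρ y`. With `δ = H⁻¹` the total is at most
`6π + M √(2π log H) + 1`.

That `ρ ∈ L²` (otherwise `∫ ρ ^ 2` is a junk `0`) follows from `ρ ^ 2 ≤ 2Hρ + 4 lnm(s) ^ 2`.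
-/

open Set Real

local notation "ℝ²" => EuclideanSpace ℝ (Fin 2)

section Radial

variable (c : ℝ²) {f : ℝ → ℝ} {S : Set ℝ}

theorem integral_comp_norm_sub :
    ∫ y : ℝ², f ‖y - c‖ = 2 * π * ∫ r in Ioi 0, r * f r := by
  rw [integral_sub_right_eq_self (fun y : ℝ² => f ‖y‖) c, integral_fun_norm_addHaar volume f]
  simp [Measure.real, mul_assoc, pi_pos.le]

theorem integrable_comp_norm_sub (hi : IntegrableOn (fun r => r * f r) S)
    (hf : ∀ r, 0 < r → r ∉ S → f r = 0) : Integrable fun y : ℝ² => f ‖y - c‖ := by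
  refine Integrable.comp_sub_right (f := fun y : ℝ² => f ‖y‖) ?_ c
  rw [integrable_fun_norm_addHaar volume, finrank_euclideanSpace_fin]
  simpa using hi.of_forall_sdiff_eq_zero measurableSet_Ioi fun r hr => by simp [hf r hr.1 hr.2]

theorem integral_comp_norm_sub_eq_setIntegral (hSpos : S ⊆ Ioi 0)
    (hf : ∀ r, 0 < r → r ∉ S → f r = 0) :
    ∫ y : ℝ², f ‖y - c‖ = 2 * π * ∫ r in S, r * f r := by
  rw [integral_comp_norm_sub, setIntegral_eq_of_subset_of_forall_sdiff_eq_zero measurableSet_Ioi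
    hSpos fun r hr => by simp [hf r hr.1 hr.2]]

end Radial

theorem lnm_nonneg (r : ℝ) : 0 ≤ lnm r := le_max_right _ _

@[fun_prop]
theorem measurable_lnm : Measurable lnm := measurable_log.neg.max measurable_const

theorem lnm_zero : lnm 0 = 0 := by simp [lnm]

theorem lnm_of_one_le {r : ℝ} (h : 1 ≤ r) : lnm r = 0 :=
  max_eq_right (neg_nonpos.2 (log_nonneg h))

theorem lnm_of_le_one {r : ℝ} (h0 : 0 ≤ r) (h1 : r ≤ 1) : lnm r = -log r :=
  max_eq_left (neg_nonneg.2 (log_nonpos h0 h1))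

theorem lnm_le_lnm {r s : ℝ} (hr : 0 < r) (hrs : r ≤ s) : lnm s ≤ lnm r :=
  max_le_max (neg_le_neg (log_le_log hr hrs)) le_rfl

theorem lnm_div_nonneg {r : ℝ} (hr : 0 ≤ r) : 0 ≤ lnm r / r := div_nonneg (lnm_nonneg r) hr

theorem mul_lnm_sq_le {r : ℝ} (hr : 0 ≤ r) : r * lnm r ^ 2 ≤ 4 := by
  rcases le_or_gt 1 r with h1 | h1
  · simp [lnm_of_one_le h1]
  rcases hr.eq_or_lt with rfl | hr
  · norm_num
  have h := abs_log_mul_self_rpow_lt r (1 / 2) hr h1.le (by norm_num)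
  have hsq : (r ^ (1 / 2 : ℝ)) ^ 2 = r := by
    rw [← rpow_natCast, ← rpow_mul hr.le]; norm_num
  rw [lnm_of_le_one hr.le h1.le]
  calc r * (-log r) ^ 2 = |log r * r ^ (1 / 2 : ℝ)| ^ 2 := by rw [sq_abs, mul_pow, hsq]; ring
    _ ≤ 2 ^ 2 := by gcongr; linarith
    _ = 4 := by norm_num

theorem lnm_div_le {r s : ℝ} (hr : 0 < r) (hs : 0 ≤ s) :
    lnm s / r ≤ lnm r / r + lnm s / s := by
  rcases le_total r s with hrs | hsr
  · have := div_le_div_of_nonneg_right (lnm_le_lnm hr hrs) hr.le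
    linarith [lnm_div_nonneg hs]
  rcases hs.eq_or_lt with rfl | hs
  · simp [lnm_zero, lnm_div_nonneg hr.le]
  have := div_le_div_of_nonneg_left (lnm_nonneg s) hs hsr
  linarith [lnm_div_nonneg hr.le]

theorem sq_le_of_le_add {a H l : ℝ} (ha : 0 ≤ a) (hH : 0 ≤ H) (hl : 0 ≤ l) (h : a ≤ H + l) :
    a ^ 2 ≤ 2 * H * a + 4 * l ^ 2 := by
  rcases le_total l H with hlH | hHl <;> nlinarith

noncomputable def nearKernel (δ : ℝ) : ℝ → ℝ := (Ioo 0 δ).indicator (·⁻¹)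

noncomputable def midKernel (δ : ℝ) : ℝ → ℝ := (Ico δ 1).indicator (·⁻¹)

theorem nearKernel_nonneg (δ : ℝ) {r : ℝ} (hr : 0 ≤ r) : 0 ≤ nearKernel δ r :=
  indicator_nonneg (fun _ _ => inv_nonneg.2 hr) r

theorem midKernel_nonneg (δ : ℝ) {r : ℝ} (hr : 0 ≤ r) : 0 ≤ midKernel δ r :=
  indicator_nonneg (fun _ _ => inv_nonneg.2 hr) r

theorem div_le_kernels {a H δ r s : ℝ} (ha : 0 ≤ a) (hH : 0 ≤ H) (hr : 0 ≤ r) (hs : 0 ≤ s)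
    (hle : a ≤ H + lnm s) :
    a / r ≤ H * nearKernel δ r + (lnm r / r + lnm s / s) + a * midKernel δ r + a := by
  have hnear := mul_nonneg hH (nearKernel_nonneg δ hr)
  have hmid := mul_nonneg ha (midKernel_nonneg δ hr)
  have hlog := add_nonneg (lnm_div_nonneg hr) (lnm_div_nonneg hs)
  rcases hr.eq_or_lt with rfl | hr
  · simp only [div_zero] at hlog ⊢; linarith
  rcases lt_or_ge r δ with hrδ | hδr
  · have hker : nearKernel δ r = r⁻¹ := indicator_of_mem (show r ∈ Ioo 0 δ from ⟨hr, hrδ⟩) _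
    have : a / r ≤ H * r⁻¹ + lnm s / r := by
      rw [← div_eq_mul_inv, ← add_div]; gcongr
    rw [hker]
    linarith [lnm_div_le hr hs]
  rcases lt_or_ge r 1 with hr1 | hr1
  · have hker : midKernel δ r = r⁻¹ := indicator_of_mem (show r ∈ Ico δ 1 from ⟨hδr, hr1⟩) _
    rw [hker, ← div_eq_mul_inv] at hmid ⊢
    linarith
  · linarith [div_le_self ha hr1]

section Kernels

variable (c : ℝ²)

theorem mul_nearKernel_eqOn (δ : ℝ) : EqOn (fun r => r * nearKernel δ r) 1 (Ioo 0 δ) :=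
  fun r hr => by simp [nearKernel, hr, hr.1.ne']

theorem nearKernel_eq_zero {δ r : ℝ} (hr : r ∉ Ioo 0 δ) : nearKernel δ r = 0 :=
  indicator_of_notMem hr _

theorem integrable_nearKernel (δ : ℝ) : Integrable fun y : ℝ² => nearKernel δ ‖y - c‖ :=
  integrable_comp_norm_sub c
    ((integrableOn_const measure_Ioo_lt_top.ne).congr_fun (mul_nearKernel_eqOn δ).symm
      measurableSet_Ioo)
    fun _ _ => nearKernel_eq_zero

theorem integral_nearKernel {δ : ℝ} (hδ : 0 ≤ δ) :
    ∫ y : ℝ², nearKernel δ ‖y - c‖ = 2 * π * δ := by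
  rw [integral_comp_norm_sub_eq_setIntegral c Ioo_subset_Ioi_self fun _ _ => nearKernel_eq_zero,
    setIntegral_congr_fun measurableSet_Ioo (mul_nearKernel_eqOn δ)]
  simp [hδ]

theorem mul_lnm_div_eqOn : EqOn (fun r => r * (lnm r / r)) (fun r => -log r) (Ioc 0 1) :=
  fun r hr => by simp [mul_div_cancel₀ _ hr.1.ne', lnm_of_le_one hr.1.le hr.2]

theorem lnm_div_eq_zero {r : ℝ} (hr : 0 < r) (hr1 : r ∉ Ioc 0 1) : lnm r / r = 0 := by
  simp [lnm_of_one_le (not_lt.1 fun h => hr1 ⟨hr, h.le⟩)]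

theorem integrable_lnm_div : Integrable fun y : ℝ² => lnm ‖y - c‖ / ‖y - c‖ := by
  refine integrable_comp_norm_sub c (f := fun r => lnm r / r) ?_ fun _ => lnm_div_eq_zero
  refine IntegrableOn.congr_fun ?_ mul_lnm_div_eqOn.symm measurableSet_Ioc
  exact (intervalIntegrable_iff_integrableOn_Ioc_of_le zero_le_one).1
    intervalIntegral.intervalIntegrable_log'.neg

theorem integral_lnm_div : ∫ y : ℝ², lnm ‖y - c‖ / ‖y - c‖ = 2 * π := by
  rw [integral_comp_norm_sub_eq_setIntegral c (f := fun r => lnm r / r) Ioc_subset_Ioi_self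
      fun _ => lnm_div_eq_zero,
    setIntegral_congr_fun measurableSet_Ioc mul_lnm_div_eqOn, integral_neg,
    ← intervalIntegral.integral_of_le zero_le_one, integral_log]
  simp

theorem integrable_lnm_sq : Integrable fun y : ℝ² => lnm ‖y - c‖ ^ 2 := by
  refine integrable_comp_norm_sub c (f := fun r => lnm r ^ 2) (S := Ioc 0 1) ?_
    fun r hr hr1 => by simp [lnm_of_one_le (not_lt.1 fun h => hr1 ⟨hr, h.le⟩)]
  refine Measure.integrableOn_of_bounded measure_Ioc_lt_top.ne (by fun_prop) (M := 4) ?_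
  filter_upwards [ae_restrict_mem measurableSet_Ioc] with r hr
  rw [Real.norm_of_nonneg (mul_nonneg hr.1.le (sq_nonneg _))]
  exact mul_lnm_sq_le hr.1.le

theorem mul_midKernel_sq_eqOn {δ : ℝ} (hδ : 0 < δ) :
    EqOn (fun r => r * midKernel δ r ^ 2) (·⁻¹) (Ico δ 1) :=
  fun r hr => by
    have : r ≠ 0 := (hδ.trans_le hr.1).ne'
    simp [midKernel, hr]; field_simp

theorem midKernel_sq_eq_zero {δ r : ℝ} (hr : r ∉ Ico δ 1) : midKernel δ r ^ 2 = 0 := by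
  simp [midKernel, hr]

theorem memLp_midKernel {δ : ℝ} (hδ : 0 < δ) :
    MemLp (fun y : ℝ² => midKernel δ ‖y - c‖) 2 := by
  have hmeas : Measurable (midKernel δ) := measurable_inv.indicator measurableSet_Ico
  refine (memLp_two_iff_integrable_sq
    (hmeas.comp (measurable_id.sub_const c).norm).aestronglyMeasurable).2 ?_
  refine integrable_comp_norm_sub c (f := fun r => midKernel δ r ^ 2) ?_
    fun _ _ => midKernel_sq_eq_zero
  refine IntegrableOn.congr_fun ?_ (mul_midKernel_sq_eqOn hδ).symm measurableSet_Ico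
  exact (continuousOn_inv₀.mono fun r hr => (hδ.trans_le hr.1).ne').integrableOn_Icc.mono_set
    Ico_subset_Icc_self

theorem integral_midKernel_sq {δ : ℝ} (hδ0 : 0 < δ) (hδ1 : δ ≤ 1) :
    ∫ y : ℝ², midKernel δ ‖y - c‖ ^ 2 = 2 * π * log δ⁻¹ := by
  rw [integral_comp_norm_sub_eq_setIntegral c (f := fun r => midKernel δ r ^ 2)
      (fun r hr => hδ0.trans_le hr.1) fun _ _ => midKernel_sq_eq_zero,
    setIntegral_congr_fun measurableSet_Ico (mul_midKernel_sq_eqOn hδ0),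
    integral_Ico_eq_integral_Ioo, ← integral_Ioc_eq_integral_Ioo,
    ← intervalIntegral.integral_of_le hδ1, integral_inv, one_div]
  rw [uIcc_of_le hδ1]
  exact fun h => hδ0.not_ge h.1

end Kernels

theorem integral_mul_le_sqrt_mul_sqrt {α : Type*} [MeasurableSpace α] {μ : Measure α}
    {f g : α → ℝ} (hf0 : 0 ≤ᵐ[μ] f) (hg0 : 0 ≤ᵐ[μ] g) (hf : MemLp f 2 μ) (hg : MemLp g 2 μ) :
    ∫ a, f a * g a ∂μ ≤ √(∫ a, f a ^ 2 ∂μ) * √(∫ a, g a ^ 2 ∂μ) := by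
  have h := integral_mul_le_Lp_mul_Lq_of_nonneg HolderConjugate.two_two hf0 hg0
    (by simpa using hf) (by simpa using hg)
  simpa only [sqrt_eq_rpow, ← rpow_natCast, Nat.cast_ofNat] using h

theorem norm_integral_smul_div_sq_le {E : Type*} [NormedAddCommGroup E] [NormedSpace ℝ E]
    [MeasurableSpace E] {μ : Measure E} {ρ : E → ℝ} (h0 : ∀ y, 0 ≤ ρ y) (x : E) :
    ‖∫ y, (ρ y / ‖x - y‖ ^ 2) • (x - y) ∂μ‖ ≤ ∫ y, ρ y / ‖y - x‖ ∂μ := by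
  refine (norm_integral_le_integral_norm _).trans_eq (integral_congr_ae (.of_forall fun y => ?_))
  rcases eq_or_ne ‖x - y‖ 0 with h | h
  · simp [h, norm_sub_rev y x]
  · dsimp only
    rw [norm_smul, Real.norm_of_nonneg (div_nonneg (h0 y) (sq_nonneg _)), norm_sub_rev y x]
    field_simp

theorem memLp_two_of_le_add_lnm {ρ : ℝ² → ℝ} {H : ℝ} {ξ : ℝ²} (hH : 0 ≤ H) (h0 : ∀ y, 0 ≤ ρ y)
    (hint : Integrable ρ) (hle : ∀ y, ρ y ≤ H + lnm ‖y - ξ‖) : MemLp ρ 2 := by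
  refine (memLp_two_iff_integrable_sq hint.aestronglyMeasurable).2 ?_
  refine ((hint.const_mul (2 * H)).add ((integrable_lnm_sq ξ).const_mul 4)).mono'
    (hint.aestronglyMeasurable.pow 2) (.of_forall fun y => ?_)
  rw [Real.norm_of_nonneg (sq_nonneg _)]
  exact sq_le_of_le_add (h0 y) hH (lnm_nonneg _) (hle y)

theorem integral_div_norm_sub_le {ρ : ℝ² → ℝ} {H δ : ℝ} {ξ : ℝ²} (x : ℝ²) (hH : 0 ≤ H)
    (hδ0 : 0 < δ) (hδ1 : δ ≤ 1) (h0 : ∀ y, 0 ≤ ρ y) (hint : Integrable ρ)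
    (hle : ∀ y, ρ y ≤ H + lnm ‖y - ξ‖) :
    ∫ y, ρ y / ‖y - x‖ ≤
      2 * π * H * δ + 4 * π + √(∫ y, ρ y ^ 2) * √(2 * π * log δ⁻¹) + ∫ y, ρ y := by
  have hρ2 := memLp_two_of_le_add_lnm hH h0 hint hle
  have hnear := (integrable_nearKernel x δ).const_mul H
  have hlog : Integrable fun y => lnm ‖y - x‖ / ‖y - x‖ + lnm ‖y - ξ‖ / ‖y - ξ‖ :=
    (integrable_lnm_div x).add (integrable_lnm_div ξ)
  have hmid : Integrable fun y => ρ y * midKernel δ ‖y - x‖ :=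
    memLp_one_iff_integrable.1 ((memLp_midKernel x hδ0).smul hρ2)
  have hCS : ∫ y, ρ y * midKernel δ ‖y - x‖ ≤ √(∫ y, ρ y ^ 2) * √(2 * π * log δ⁻¹) := by
    rw [← integral_midKernel_sq x hδ0 hδ1]
    exact integral_mul_le_sqrt_mul_sqrt (.of_forall h0)
      (.of_forall fun y => midKernel_nonneg δ (norm_nonneg _)) hρ2 (memLp_midKernel x hδ0)
  have hnl : Integrable fun y => H * nearKernel δ ‖y - x‖
      + (lnm ‖y - x‖ / ‖y - x‖ + lnm ‖y - ξ‖ / ‖y - ξ‖) := hnear.add hlog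
  have hnlm : Integrable fun y => H * nearKernel δ ‖y - x‖
      + (lnm ‖y - x‖ / ‖y - x‖ + lnm ‖y - ξ‖ / ‖y - ξ‖) + ρ y * midKernel δ ‖y - x‖ :=
    hnl.add hmid
  calc ∫ y, ρ y / ‖y - x‖
      ≤ ∫ y, (H * nearKernel δ ‖y - x‖ + (lnm ‖y - x‖ / ‖y - x‖ + lnm ‖y - ξ‖ / ‖y - ξ‖)
          + ρ y * midKernel δ ‖y - x‖ + ρ y) :=
        integral_mono_of_nonneg (.of_forall fun y => div_nonneg (h0 y) (norm_nonneg _))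
          (hnlm.add hint)
          (.of_forall fun y => div_le_kernels (h0 y) hH (norm_nonneg _) (norm_nonneg _) (hle y))
    _ = H * (2 * π * δ) + (2 * π + 2 * π) + (∫ y, ρ y * midKernel δ ‖y - x‖) + ∫ y, ρ y := by
        rw [integral_add hnlm hint, integral_add hnl hmid, integral_add hnear hlog,
          integral_add (integrable_lnm_div x) (integrable_lnm_div ξ), integral_const_mul,
          integral_nearKernel x hδ0.le, integral_lnm_div, integral_lnm_div]
    _ ≤ _ := by linarith

theorem field_sup_bound (M : ℝ) (hM : 0 < M) :
    ∃ C > 0, ∀ (ρ : EuclideanSpace ℝ (Fin 2) → ℝ) (H : ℝ)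
      (ξ : EuclideanSpace ℝ (Fin 2)),
      1 ≤ H → Measurable ρ → (∀ x, 0 ≤ ρ x) → Integrable ρ →
      (∀ x, ρ x ≤ H + lnm ‖x - ξ‖) →
      (∫ x, ρ x) ≤ 1 → Real.sqrt (∫ x, ρ x ^ 2) ≤ M →
      ∀ x : EuclideanSpace ℝ (Fin 2),
        ‖∫ y, (ρ y / ‖x - y‖ ^ 2) • (x - y)‖ ≤
          C * Real.sqrt (Real.log (H + Real.exp 1)) := by
  refine ⟨6 * π + 1 + √(2 * π) * M, by positivity, fun ρ H ξ hH _ h0 hint hle hρ1 hρ2 x => ?_⟩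
  have hH0 : 0 < H := one_pos.trans_le hH
  have hfield := (norm_integral_smul_div_sq_le h0 x).trans
    (integral_div_norm_sub_le x hH0.le (inv_pos.2 hH0) (inv_le_one_of_one_le₀ hH) h0 hint hle)
  have hlog : 1 ≤ √(log (H + exp 1)) := by
    rw [one_le_sqrt, le_log_iff_exp_le (by positivity)]
    linarith
  have hlogH : √(2 * π * log H⁻¹⁻¹) ≤ √(2 * π) * √(log (H + exp 1)) := by
    rw [inv_inv, ← sqrt_mul (by positivity)]
    gcongr
    exact le_add_of_nonneg_right (exp_pos 1).le
  rw [mul_assoc, mul_inv_cancel₀ hH0.ne', mul_one] at hfield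
  nlinarith [mul_le_mul hρ2 hlogH (sqrt_nonneg _) hM.le, sqrt_nonneg (2 * π), pi_pos]
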